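/- Eventual disabling of internal reactions along fairly projected-finite paths: Let P be a pathway, comp : species(P) → I a component map and J ⊆ I. If π is an infinite fair maximal path of LTS(P) such that only finitely many steps of π are labelled by reactions R with comp(R) ∩ J ≠ ∅, then there is a position k such that for every position k' ≥ k, no reaction R ∈ P with comp(R) ⊆ J is enabled at the k'-th state of π. -/

import Mathlib

open scoped Classical

/-- A reaction: a triple of finite sets of species (reactants, products, catalysts). -/
structure Reaction (S : Type*) where
  re : Finset S
  pro : Finset S
  cat : Finset S

namespace Reaction
/-- The species involved in a reaction. -/
def speciesSet {S : Type*} (R : Reaction S) : Set S := ↑R.re ∪ ↑R.pro ∪ ↑R.cat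
end Reaction

variable {S I : Type*}

/-- A reaction is enabled at a state. -/
def enabled (R : Reaction S) (s : Set S) : Prop :=
  ↑R.re ⊆ s ∧ ¬ (↑R.pro : Set S) ⊆ s ∧ ↑R.cat ⊆ s

/-- The transition relation of the LTS: rule (cat) and rule (no-cat). -/
def Step (R : Reaction S) (s s' : Set S) : Prop :=
  (↑R.re ⊆ s ∧ ¬ (↑R.pro : Set S) ⊆ s ∧ R.cat ≠ ∅ ∧ ↑R.cat ⊆ s ∧
      s' = (s \ ↑R.re) ∪ ↑R.pro) ∨
  (↑R.re ⊆ s ∧ ¬ (↑R.pro : Set S) ⊆ s ∧ R.cat = ∅ ∧ s' = s ∪ ↑R.pro)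

/-- The species of a pathway. -/
def pathwaySpecies (P : Finset (Reaction S)) : Set S := ⋃ R ∈ P, R.speciesSet

/-- The set of components of a reaction: the image of its species under `comp`. -/
def compSet (comp : S → I) (R : Reaction S) : Set I := comp '' R.speciesSet

/-- species(J): all species of reactions having some component in J. -/
def speciesJ (P : Finset (Reaction S)) (comp : S → I) (J : Set I) : Set S :=
  {s | ∃ R ∈ P, (compSet comp R ∩ J).Nonempty ∧ s ∈ R.speciesSet}

/-- Projection of a set of species onto J. -/
def projSet (P : Finset (Reaction S)) (comp : S → I) (J : Set I) (u : Set S) : Set S :=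
  u ∩ speciesJ P comp J

/-- Projection of a finite set of species onto J. -/
noncomputable def projFin (P : Finset (Reaction S)) (comp : S → I) (J : Set I)
    (u : Finset S) : Finset S :=
  u.filter (· ∈ speciesJ P comp J)

/-- PR: the reactions of P all of whose components are in J. -/
def PR (P : Finset (Reaction S)) (comp : S → I) (J : Set I) : Set (Reaction S) :=
  {R | R ∈ P ∧ compSet comp R ⊆ J}

/-- The projected version of a reaction. -/
noncomputable def projReaction (P : Finset (Reaction S)) (comp : S → I) (J : Set I)
    (R : Reaction S) : Reaction S :=
  ⟨projFin P comp J R.re, projFin P comp J R.pro, projFin P comp J R.cat⟩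

/-- The self-loop version of a projected reaction. -/
noncomputable def loopReaction (P : Finset (Reaction S)) (comp : S → I) (J : Set I)
    (R : Reaction S) : Reaction S :=
  ⟨projFin P comp J R.re, projFin P comp J R.re, projFin P comp J R.cat⟩

/-- AR: the abstract reactions coming from reactions crossing the boundary of J. -/
def AR (P : Finset (Reaction S)) (comp : S → I) (J : Set I) : Set (Reaction S) :=
  {R' | ∃ R ∈ P, (compSet comp R ∩ J).Nonempty ∧ (compSet comp R ∩ Jᶜ).Nonempty ∧
        (R' = projReaction P comp J R ∨ R' = loopReaction P comp J R)}

/-- A finite or infinite alternating sequence of states and (optional) reaction labels.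
`len` is the number of steps (`⊤` for infinite); states live at positions `≤ len`,
labels at positions `< len`.  A label `none` denotes a stuttering step `*`. -/
structure RPath (S : Type*) where
  len : ℕ∞
  state : ℕ → Set S
  label : ℕ → Option (Reaction S)

/-- π is a path of the LTS of the set of reactions Q. -/
def IsPath (Q : Set (Reaction S)) (π : RPath S) : Prop :=
  ∀ i : ℕ, (i : ℕ∞) < π.len →
    ∃ R, π.label i = some R ∧ R ∈ Q ∧ Step R (π.state i) (π.state (i + 1))

/-- π is a maximal path of the LTS of Q. -/
def IsMaximal (Q : Set (Reaction S)) (π : RPath S) : Prop :=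
  IsPath Q π ∧
    (π.len = ⊤ ∨ ∃ n : ℕ, π.len = (n : ℕ∞) ∧ ∀ R ∈ Q, ¬ enabled R (π.state n))

/-- Fairness with respect to the reactions in Q: every reaction of Q enabled at
infinitely many positions occurs at infinitely many steps. -/
def FairFor (Q : Set (Reaction S)) (π : RPath S) : Prop :=
  ∀ R ∈ Q, {i : ℕ | (i : ℕ∞) ≤ π.len ∧ enabled R (π.state i)}.Infinite →
    {i : ℕ | (i : ℕ∞) < π.len ∧ π.label i = some R}.Infinite
/-- Step i of π is kept by the projection onto J. -/
def keptStep (comp : S → I) (J : Set I) (π : RPath S) (i : ℕ) : Prop :=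
  (i : ℕ∞) < π.len ∧ ∃ R, π.label i = some R ∧ (compSet comp R ∩ J).Nonempty

/-- The projection π↾J of a path: steps labelled by reactions with no component in J
are deleted and the remaining states are projected onto J. -/
noncomputable def projPath (P : Finset (Reaction S)) (comp : S → I) (J : Set I)
    (π : RPath S) : RPath S :=
  if {i | keptStep comp J π i}.Infinite then
    ⟨⊤, fun n => projSet P comp J (π.state (Nat.nth (keptStep comp J π) n)),
        fun n => π.label (Nat.nth (keptStep comp J π) n)⟩
  else
    let m := {i | keptStep comp J π i}.ncard
    let endIdx : ℕ :=
      if π.len = ⊤ then (if m = 0 then 0 else Nat.nth (keptStep comp J π) (m - 1) + 1)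
      else π.len.toNat
    ⟨(m : ℕ∞),
     fun n => projSet P comp J
       (π.state (if n < m then Nat.nth (keptStep comp J π) n else endIdx)),
     fun n => if n < m then π.label (Nat.nth (keptStep comp J π) n) else none⟩

/-- π↾∞J: if π↾J is finite, extend it with infinitely many stuttering steps
(labelled by the non-reaction symbol `*`, represented by `none`). -/
noncomputable def infExtend (π : RPath S) : RPath S :=
  if π.len = ⊤ then π
  else ⟨⊤, fun n => π.state (min n π.len.toNat),
          fun n => if (n : ℕ∞) < π.len then π.label n else none⟩

/-- A finite or infinite sequence belongs to the LTS of Q iff every step labelled by a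
reaction is a transition of that LTS, every stuttering step repeats the current state,
and the sequence is infinite or ends in a state at which no reaction of Q is enabled. -/
def BelongsTo (Q : Set (Reaction S)) (π : RPath S) : Prop :=
  (∀ i : ℕ, (i : ℕ∞) < π.len →
      (∀ R, π.label i = some R → R ∈ Q ∧ Step R (π.state i) (π.state (i + 1))) ∧
      (π.label i = none → π.state (i + 1) = π.state i)) ∧
  (π.len = ⊤ ∨ ∃ n : ℕ, π.len = (n : ℕ∞) ∧ ∀ R ∈ Q, ¬ enabled R (π.state n))

/-- ACTL⁻ formulas. -/
inductive ACTL (S : Type*) where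
  | tt : ACTL S
  | ff : ACTL S
  | atom (s : S) : ACTL S
  | natom (s : S) : ACTL S
  | and (f g : ACTL S) : ACTL S
  | or (f g : ACTL S) : ACTL S
  | au (f g : ACTL S) : ACTL S
  | auw (f g : ACTL S) : ACTL S

/-- The atomic propositions occurring in an ACTL⁻ formula. -/
def atoms {S : Type*} : ACTL S → Set S
  | .tt => ∅
  | .ff => ∅
  | .atom s => {s}
  | .natom s => {s}
  | .and f g => atoms f ∪ atoms g
  | .or f g => atoms f ∪ atoms g
  | .au f g => atoms f ∪ atoms g
  | .auw f g => atoms f ∪ atoms g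

/-- Satisfaction of an ACTL⁻ formula at a state, relative to a set `D` of designated
maximal paths: path quantifiers range over the paths of `D` starting at the state. -/
def Sat {S : Type*} (D : Set (RPath S)) : ACTL S → Set S → Prop
  | .tt, _ => True
  | .ff, _ => False
  | .atom a, t => a ∈ t
  | .natom a, t => a ∉ t
  | .and f g, t => Sat D f t ∧ Sat D g t
  | .or f g, t => Sat D f t ∨ Sat D g t
  | .au f g, t => ∀ π ∈ D, π.state 0 = t →
      ∃ m : ℕ, (m : ℕ∞) ≤ π.len ∧ Sat D g (π.state m) ∧
        ∀ m' < m, Sat D f (π.state m')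
  | .auw f g, t => ∀ π ∈ D, π.state 0 = t →
      ∀ m : ℕ, (m : ℕ∞) ≤ π.len →
        (∀ m' < m, ¬ Sat D g (π.state m')) → Sat D f (π.state m)

/-- The suffix of a path starting at its k-th state. -/
def suffixPath (π : RPath S) (k : ℕ) : RPath S :=
  ⟨π.len - (k : ℕ∞), fun n => π.state (k + n), fun n => π.label (k + n)⟩


/-! An internal reaction enabled somewhere has a product, so it meets `J`; fairness then makes it
occur infinitely often, which the finiteness of the `J`-labelled steps forbids. Hence each of the
finitely many internal reactions is enabled only finitely often. -/

theorem Reaction.compSet_inter_nonempty_of_enabled {comp : S → I} {J : Set I} {R : Reaction S}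
    {s : Set S} (hRJ : compSet comp R ⊆ J) (hR : enabled R s) : (compSet comp R ∩ J).Nonempty := by
  obtain ⟨x, hx, -⟩ := Set.not_subset.mp hR.2.1
  have hx' : comp x ∈ compSet comp R := ⟨x, Or.inl (Or.inr hx), rfl⟩
  exact ⟨comp x, hx', hRJ hx'⟩

theorem FairFor.finite_setOf_enabled {Q : Set (Reaction S)} {π : RPath S} (hfair : FairFor Q π)
    (hlen : π.len = ⊤) {R : Reaction S} (hR : R ∈ Q) (hocc : {i | π.label i = some R}.Finite) :
    {i | enabled R (π.state i)}.Finite := by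
  by_contra hinf
  exact hfair R hR (by simpa [hlen] using hinf) (hocc.subset fun i hi => hi.2)

theorem eventual_disabling_general {S I : Type*} (P : Finset (Reaction S)) (comp : S → I)
    (J : Set I) (π : RPath S) (hlen : π.len = ⊤)
    (hfair : FairFor (↑P) π)
    (hfin : {i : ℕ | ∃ R, π.label i = some R ∧ (compSet comp R ∩ J).Nonempty}.Finite) :
    ∃ k : ℕ, ∀ k' ≥ k, ∀ R ∈ P, compSet comp R ⊆ J → ¬ enabled R (π.state k') := by
  have hinternal (R : Reaction S) (hR : R ∈ P) (hRJ : compSet comp R ⊆ J) :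
      {k | enabled R (π.state k)}.Finite := by
    by_contra hinf
    obtain ⟨i, hi⟩ := Set.Infinite.nonempty hinf
    have hJ := Reaction.compSet_inter_nonempty_of_enabled hRJ hi
    exact hinf (hfair.finite_setOf_enabled hlen hR (hfin.subset fun j hj => ⟨R, hj, hJ⟩))
  refine Filter.eventually_atTop.mp ((Filter.eventually_all_finset P).mpr fun R hR => ?_)
  by_cases hRJ : compSet comp R ⊆ J
  · filter_upwards [(hinternal R hR hRJ).eventually_cofinite_notMem.filter_mono
      Nat.cofinite_eq_atTop.ge] with k hk _ using hk
  · exact Filter.Eventually.of_forall fun _ h => absurd h hRJ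

/-- **Eventual disabling of internal reactions along fairly projected-finite paths.**
If `π` is an infinite fair maximal path of `LTS(P)` with only finitely many steps
labelled by reactions having some component in `J`, then from some position on no
reaction of `P` all of whose components are in `J` is enabled. -/
theorem eventual_disabling {S I : Type*} (P : Finset (Reaction S)) (comp : S → I)
    (J : Set I) (π : RPath S) (hlen : π.len = ⊤)
    (hmax : IsMaximal (↑P) π) (hfair : FairFor (↑P) π)
    (hfin : {i : ℕ | ∃ R, π.label i = some R ∧ (compSet comp R ∩ J).Nonempty}.Finite) :
    ∃ k : ℕ, ∀ k' ≥ k, ∀ R ∈ P, compSet comp R ⊆ J → ¬ enabled R (π.state k') :=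
  eventual_disabling_general P comp J π hlen hfair hfin
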